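/- arXiv:math/0602549 — 6 statements merged into one kernel-verified Lean document; each statement's English description precedes it below -/
import Mathlib

section
/- Let k be a field, h ≥ 1 an integer, and σ₁,…,σ_r ∈ k[x] with σ_i(0) ≠ σ_j(0) for i ≠ j. Set P(x,y) = ∏_{i=1}^r (y − σ_i(x)). Then for every b(x) ∈ k[x], the map Δ_b(x,y,z) = (x, y + x^h·b(x), z + x^{−h}(P(x, y + x^h·b(x)) − P(x,y))) is a polynomial automorphism of A³_k (the third coordinate is a polynomial in x,y,z), and it maps the surface S = {x^h z − P(x,y) = 0} into itself. -/
open Polynomial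

/-- For `P(x,y) = ∏ (y - σ_i(x))` and any `b ∈ k[x]`, the difference
`P(x, y + x^h b(x)) - P(x,y)` is divisible by `x^h`, and the resulting map
`Δ_b(x,y,z) = (x, y + x^h b(x), z + x^{-h}(P(x, y + x^h b) - P(x,y)))` is a polynomial
automorphism of A³ preserving the surface `x^h z = P(x,y)`. -/
theorem stmt2 (k : Type*) [Field k] (r h : ℕ) (hh : 1 ≤ h)
    (σ : Fin r → Polynomial k)
    (hdist : ∀ i j, i ≠ j → (σ i).eval 0 ≠ (σ j).eval 0)
    (b : Polynomial k)
    (P : Polynomial (Polynomial k)) (hP : P = ∏ i, (X - C (σ i))) :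
    ∃ D : Polynomial (Polynomial k),
      C (X ^ h) * D = P.comp (X + C (X ^ h * b)) - P ∧
      Function.Bijective (fun p : k × k × k =>
        (p.1, p.2.1 + p.1 ^ h * b.eval p.1,
          p.2.2 + (D.map (evalRingHom p.1)).eval p.2.1)) ∧
      ∀ p : k × k × k, p.1 ^ h * p.2.2 = (P.map (evalRingHom p.1)).eval p.2.1 →
        p.1 ^ h * (p.2.2 + (D.map (evalRingHom p.1)).eval p.2.1)
          = (P.map (evalRingHom p.1)).eval (p.2.1 + p.1 ^ h * b.eval p.1) := by
  set a : Polynomial k := X ^ h * b with ha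
  have hdvd : C (X ^ h) ∣ P.comp (X + C a) - P := by
    have h1 : C a ∣ P.comp (X + C a) - P := by
      have h2 := sub_dvd_eval_sub (X + C a) X
        (P.map (C : Polynomial k →+* Polynomial (Polynomial k)))
      simp only [add_sub_cancel_left] at h2
      have e1 : (P.map (C : Polynomial k →+* Polynomial (Polynomial k))).eval (X + C a)
          = P.comp (X + C a) := by
        rw [eval_map]; rfl
      have e2 : (P.map (C : Polynomial k →+* Polynomial (Polynomial k))).eval X
          = P.comp X := by
        rw [eval_map]; rfl
      rwa [e1, e2, comp_X] at h2
    exact dvd_trans (map_dvd (C : Polynomial k →+* Polynomial (Polynomial k))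
      ⟨b, rfl⟩) h1
  obtain ⟨D, hD⟩ := hdvd
  refine ⟨D, hD.symm, ?_, ?_⟩
  · -- bijectivity
    rw [Function.bijective_iff_has_inverse]
    refine ⟨fun p => (p.1, p.2.1 - p.1 ^ h * b.eval p.1,
      p.2.2 - (D.map (evalRingHom p.1)).eval (p.2.1 - p.1 ^ h * b.eval p.1)), ?_, ?_⟩
    · intro p
      simp
    · intro p
      simp
  · -- surface preservation
    intro p hp
    obtain ⟨x, y, z⟩ := p
    simp only at hp ⊢
    have key := congrArg (fun q : Polynomial (Polynomial k) =>
      ((q.map (evalRingHom x)).eval y)) hD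
    simp only [Polynomial.map_mul, eval_mul, map_C, Polynomial.map_sub, eval_sub, eval_C, coe_evalRingHom, eval_pow, eval_X] at key
    have hcomp : ((P.comp (X + C a)).map (evalRingHom x)).eval y
        = (P.map (evalRingHom x)).eval (y + x ^ h * b.eval x) := by
      rw [map_comp, eval_comp]
      simp [ha]
    rw [hcomp] at key
    have hC : ((C (X ^ h) : Polynomial (Polynomial k)).map (evalRingHom x)).eval y
        = x ^ h := by simp
    -- key : x^h * (D.map φ).eval y = P(y + x^h b) - P(y)
    have key' : x ^ h * (D.map (evalRingHom x)).eval y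
        = (P.map (evalRingHom x)).eval (y + x ^ h * b.eval x)
          - (P.map (evalRingHom x)).eval y := by
      linear_combination -key
    rw [mul_add, hp, key']
    ring
end

section
/- Let k be a field, r ≥ 2, and y₁,…,y_r ∈ k pairwise distinct. Suppose α ∈ S_r is a nontrivial permutation, μ ∈ k*, c ∈ k satisfy y_{α(i)} = μ·y_i + c for all i. Let s ≥ 2 be the minimal length of a nontrivial cycle of α. Then μ^s = 1. Moreover, if μ = 1 then char(k) = s, α has no fixed points, and every nontrivial cycle of α has length s; and if μ ≠ 1 then μ^{s'} ≠ 1 for every 1 ≤ s' < s and every nontrivial cycle of α has length s. -/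
private lemma cycle_period {r : ℕ} (α : Equiv.Perm (Fin r)) (x : Fin r) (hx : α x ≠ x) (n : ℕ) :
    (α ^ n) x = x ↔ (α.cycleOf x).support.card ∣ n := by
  classical
  have hc := Equiv.Perm.isCycle_cycleOf α hx
  have hgx : (α.cycleOf x) x ≠ x := by rwa [Equiv.Perm.cycleOf_apply_self]
  rw [← Equiv.Perm.cycleOf_pow_apply_self α x n, ← hc.pow_eq_one_iff' hgx,
    ← orderOf_dvd_iff_pow_eq_one, hc.orderOf]

private lemma cycleType_pt {r : ℕ} (α : Equiv.Perm (Fin r)) {t : ℕ} (ht : t ∈ α.cycleType) :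
    ∃ x : Fin r, α x ≠ x ∧ (α.cycleOf x).support.card = t := by
  classical
  rw [Equiv.Perm.cycleType_def, Multiset.mem_map] at ht
  obtain ⟨g, hg, hgt⟩ := ht
  have hg' : g ∈ α.cycleFactorsFinset := hg
  obtain ⟨hgc, hagree⟩ := Equiv.Perm.mem_cycleFactorsFinset_iff.mp hg'
  have hcard : 0 < g.support.card := by
    have := hgc.two_le_card_support; omega
  obtain ⟨x, hx⟩ := Finset.card_pos.mp hcard
  have hgx : g x ≠ x := Equiv.Perm.mem_support.mp hx
  have hax : α x ≠ x := by rw [← hagree x hx]; exact hgx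
  have hco : g = α.cycleOf x := Equiv.Perm.cycle_is_cycleOf hx hg'
  exact ⟨x, hax, by rw [← hco]; exact hgt⟩

/-- Structure of the data `(α, μ, c)` with `y_{α(i)} = μ y_i + c`: letting `s` be the minimal
length of a nontrivial cycle of the nontrivial permutation `α`, one has `μ^s = 1`; if `μ = 1`
then `char k = s`, `α` is fixed-point free and all cycles of `α` have length `s`; if `μ ≠ 1`
then `μ^{s'} ≠ 1` for `1 ≤ s' < s` and all cycles of `α` have length `s`. -/
theorem stmt7 (k : Type*) [Field k] (r : ℕ) (hr : 2 ≤ r)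
    (y : Fin r → k) (hy : Function.Injective y)
    (α : Equiv.Perm (Fin r)) (hα : α ≠ 1) (μ c : k) (hμ : μ ≠ 0)
    (hrel : ∀ i, y (α i) = μ * y i + c)
    (s : ℕ) (hs : s ∈ α.cycleType) (hmin : ∀ t ∈ α.cycleType, s ≤ t) :
    μ ^ s = 1 ∧
    (μ = 1 → ringChar k = s ∧ (∀ i, α i ≠ i) ∧ ∀ t ∈ α.cycleType, t = s) ∧
    (μ ≠ 1 → (∀ s' : ℕ, 1 ≤ s' → s' < s → μ ^ s' ≠ 1) ∧ ∀ t ∈ α.cycleType, t = s) := by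
  classical
  by_cases hμ1 : μ = 1
  · -- case μ = 1
    subst hμ1
    have hc0 : c ≠ 0 := by
      intro h
      apply hα
      refine Equiv.ext fun i => hy ?_
      simp only [Equiv.Perm.one_apply]
      rw [hrel i, h, one_mul, add_zero]
    have hiter : ∀ (n : ℕ) (i : Fin r), y ((α ^ n) i) = y i + (n : k) * c := by
      intro n
      induction n with
      | zero => simp
      | succ n ih =>
        intro i
        rw [pow_succ, Equiv.Perm.mul_apply, ih (α i), hrel i]
        push_cast
        ring
    have key : ∀ (i : Fin r) (n : ℕ), (α ^ n) i = i ↔ ringChar k ∣ n := by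
      intro i n
      rw [← ringChar.spec]
      constructor
      · intro h
        have h2 := hiter n i
        rw [h] at h2
        have h3 : (n : k) * c = 0 := left_eq_add.mp h2
        rcases mul_eq_zero.mp h3 with h4 | h4
        · exact h4
        · exact absurd h4 hc0
      · intro h
        apply hy
        rw [hiter n i, h, zero_mul, add_zero]
    have hfix : ∀ i, α i ≠ i := by
      intro i hi
      have h1 : (α ^ 1) i = i := by simpa using hi
      have h2 : ((1 : ℕ) : k) = 0 := (ringChar.spec k 1).mpr ((key i 1).mp h1)
      simp at h2
    have hall : ∀ t ∈ α.cycleType, t = ringChar k := by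
      intro t ht
      obtain ⟨x, hx, hxt⟩ := cycleType_pt α ht
      have hiff : ∀ n, t ∣ n ↔ ringChar k ∣ n := by
        intro n
        rw [← hxt, ← cycle_period α x hx n, key x n]
      exact Nat.dvd_antisymm ((hiff (ringChar k)).mpr dvd_rfl) ((hiff t).mp dvd_rfl)
    exact ⟨one_pow s, fun _ => ⟨(hall s hs).symm, hfix,
      fun t ht => (hall t ht).trans (hall s hs).symm⟩, fun h => absurd rfl h⟩
  · -- case μ ≠ 1
    have h1μ : (1 : k) - μ ≠ 0 := sub_ne_zero.mpr (Ne.symm hμ1)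
    set x₀ : k := c / (1 - μ) with hx₀def
    have hx₀ : μ * x₀ + c = x₀ := by
      have h1 : x₀ * (1 - μ) = c := div_mul_cancel₀ c h1μ
      linear_combination -h1
    set z : Fin r → k := fun i => y i - x₀ with hz
    have hzrel : ∀ i, z (α i) = μ * z i := by
      intro i
      show y (α i) - x₀ = μ * (y i - x₀)
      linear_combination hrel i + hx₀
    have hziter : ∀ (n : ℕ) (i : Fin r), z ((α ^ n) i) = μ ^ n * z i := by
      intro n
      induction n with
      | zero => simp
      | succ n ih =>
        intro i
        rw [pow_succ, Equiv.Perm.mul_apply, ih (α i), hzrel i]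
        ring
    have hzinj : Function.Injective z := by
      intro a b h
      apply hy
      have h2 : y a - x₀ = y b - x₀ := h
      exact sub_left_inj.mp h2
    have hz0 : ∀ i, α i ≠ i → z i ≠ 0 := by
      intro i hi h0
      apply hi
      apply hzinj
      rw [hzrel i, h0, mul_zero]
    have key : ∀ i, α i ≠ i → ∀ n, (α ^ n) i = i ↔ μ ^ n = 1 := by
      intro i hi n
      have hzi := hz0 i hi
      constructor
      · intro h
        have h2 := hziter n i
        rw [h] at h2
        have : μ ^ n * z i = 1 * z i := by rw [one_mul]; exact h2.symm
        exact mul_right_cancel₀ hzi this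
      · intro h
        apply hzinj
        rw [hziter n i, h, one_mul]
    have hall : ∀ t ∈ α.cycleType, t = orderOf μ := by
      intro t ht
      obtain ⟨x, hx, hxt⟩ := cycleType_pt α ht
      have hiff : ∀ n, t ∣ n ↔ orderOf μ ∣ n := by
        intro n
        rw [← hxt, ← cycle_period α x hx n, key x hx n, orderOf_dvd_iff_pow_eq_one]
      exact Nat.dvd_antisymm ((hiff (orderOf μ)).mpr dvd_rfl) ((hiff t).mp dvd_rfl)
    have hss : s = orderOf μ := hall s hs
    refine ⟨?_, fun h => absurd h hμ1, fun _ => ⟨?_, fun t ht => (hall t ht).trans hss.symm⟩⟩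
    · rw [hss]
      exact pow_orderOf_eq_one μ
    · intro s' hs1 hs2 hpow
      have hdvd : orderOf μ ∣ s' := orderOf_dvd_iff_pow_eq_one.mpr hpow
      have hle : orderOf μ ≤ s' := Nat.le_of_dvd (by omega) hdvd
      omega
end

section
/- Let k be a field, h ≥ 1, σ₁,…,σ_r ∈ k[x]. Suppose the polynomial Q(x,y) factors as Q(x,y) = R₁(x,y)·∏_{i=1}^r (y − σ_i(x)) + x^h R₂(x,y), and let f, g ∈ k[x,y] satisfy R₁·f + x^h·g = 1. Then the endomorphisms of A³_k given by Φ^s(x,y,z) = (x, y, R₁(x,y)·z + R₂(x,y)) and Φ_s(x,y,z) = (x, y, f·z + g·∏(y − σ_i(x)) − f·R₂) satisfy: Φ^s maps the surface S_σ = {x^h z = ∏(y − σ_i(x))} into S_Q = {x^h z = Q(x,y)}, Φ_s maps S_Q into S_σ, and the induced morphisms are mutually inverse isomorphisms S_σ ≅ S_Q. -/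
open Polynomial

/-- Evaluation of a polynomial `F ∈ k[x][y]` at a point `(x,y) ∈ k²`. -/
noncomputable def ev2 {k : Type*} [CommRing k] (F : Polynomial (Polynomial k)) (x y : k) : k :=
  (F.map (Polynomial.evalRingHom x)).eval y

/-- `ev2` bundled as a ring homomorphism. -/
noncomputable def ev2Hom {k : Type*} [CommRing k] (x y : k) :
    Polynomial (Polynomial k) →+* k :=
  (Polynomial.evalRingHom y).comp (Polynomial.mapRingHom (Polynomial.evalRingHom x))

lemma ev2_eq {k : Type*} [CommRing k] (F : Polynomial (Polynomial k)) (x y : k) :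
    ev2 F x y = ev2Hom x y F := rfl

lemma ev2_C_Xpow {k : Type*} [CommRing k] (h : ℕ) (x y : k) :
    ev2 (C (X ^ h)) x y = x ^ h := by
  simp [ev2]

/-- If `Q = R₁ ∏(y - σ_i(x)) + x^h R₂` and `R₁ f + x^h g = 1`, then
`Φ^s(x,y,z) = (x,y,R₁ z + R₂)` and `Φ_s(x,y,z) = (x,y, f z + g ∏(y-σ_i) - f R₂)` restrict to
mutually inverse isomorphisms between `S_σ = {x^h z = ∏(y - σ_i(x))}` and
`S_Q = {x^h z = Q(x,y)}`. -/
theorem stmt11 (k : Type*) [Field k] (r h : ℕ) (hh : 1 ≤ h)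
    (σ : Fin r → Polynomial k)
    (Q R₁ R₂ f g : Polynomial (Polynomial k))
    (hfact : Q = R₁ * ∏ i, (X - C (σ i)) + C (X ^ h) * R₂)
    (hinv : R₁ * f + C (X ^ h) * g = 1) :
    let Pσ : Polynomial (Polynomial k) := ∏ i, (X - C (σ i))
    let Φs : k × k × k → k × k × k := fun p =>
      (p.1, p.2.1, ev2 R₁ p.1 p.2.1 * p.2.2 + ev2 R₂ p.1 p.2.1)
    let Φi : k × k × k → k × k × k := fun p =>
      (p.1, p.2.1, ev2 f p.1 p.2.1 * p.2.2 + ev2 g p.1 p.2.1 * ev2 Pσ p.1 p.2.1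
        - ev2 f p.1 p.2.1 * ev2 R₂ p.1 p.2.1)
    let Sσ : Set (k × k × k) := {p | p.1 ^ h * p.2.2 = ev2 Pσ p.1 p.2.1}
    let SQ : Set (k × k × k) := {p | p.1 ^ h * p.2.2 = ev2 Q p.1 p.2.1}
    Set.MapsTo Φs Sσ SQ ∧ Set.MapsTo Φi SQ Sσ ∧
    (∀ p ∈ Sσ, Φi (Φs p) = p) ∧ (∀ p ∈ SQ, Φs (Φi p) = p) := by
  intro Pσ Φs Φi Sσ SQ
  have hC : ∀ a b : k, ev2Hom a b (C (X ^ h)) = a ^ h := by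
    intro a b; simp [ev2Hom]
  have key : ∀ a b : k,
      ev2 Q a b = ev2 R₁ a b * ev2 Pσ a b + a ^ h * ev2 R₂ a b ∧
      ev2 R₁ a b * ev2 f a b + a ^ h * ev2 g a b = 1 := by
    intro a b
    constructor
    · have t := congrArg (ev2Hom a b) hfact
      rw [map_add, map_mul, map_mul, hC] at t
      exact t
    · have t := congrArg (ev2Hom a b) hinv
      rw [map_add, map_mul, map_mul, hC, map_one] at t
      exact t
  refine ⟨?_, ?_, ?_, ?_⟩
  · rintro ⟨a, b, c⟩ hp
    obtain ⟨h1, h2⟩ := key a b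
    simp only [Sσ, Set.mem_setOf_eq] at hp
    simp only [SQ, Φs, Set.mem_setOf_eq]
    linear_combination ev2 R₁ a b * hp - h1
  · rintro ⟨a, b, c⟩ hp
    obtain ⟨h1, h2⟩ := key a b
    simp only [SQ, Set.mem_setOf_eq] at hp
    simp only [Sσ, Φi, Set.mem_setOf_eq]
    linear_combination ev2 f a b * hp + ev2 f a b * h1 + ev2 Pσ a b * h2
  · rintro ⟨a, b, c⟩ hp
    obtain ⟨h1, h2⟩ := key a b
    simp only [Sσ, Set.mem_setOf_eq] at hp
    simp only [Φs, Φi, Prod.mk.injEq, true_and]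
    linear_combination c * h2 - ev2 g a b * hp
  · rintro ⟨a, b, c⟩ hp
    obtain ⟨h1, h2⟩ := key a b
    simp only [SQ, Set.mem_setOf_eq] at hp
    simp only [Φs, Φi, Prod.mk.injEq, true_and]
    linear_combination c * h2 - ev2 R₂ a b * h2 - ev2 g a b * h1 - ev2 g a b * hp
end

section
/- Over k = ℂ, the surfaces S₀ = {x²z − (y²−1) = 0} and S₁ = {x²z − (1−x)(y²−1) = 0} in A³_ℂ are not algebraically equivalent embeddings: there is no algebraic automorphism Φ of A³_ℂ with Φ(S₁) = S₀. Specifically, every level surface f₁^{−1}(t) of f₁ = x²z − (1−x)(y²−1) is nonsingular, while the level surface f₀^{−1}(1) of f₀ = x²z − (y²−1) is singular, so no automorphism Φ of A³_ℂ and automorphism φ of A¹_ℂ can satisfy f₀ ∘ Φ = φ ∘ f₁. -/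
/-!
A pair `(Φ, φ)` with `f₀ ∘ Φ = φ ∘ f₁` would pull critical points of `f₀` back to critical points
of `f₁`: `Φ` is differentiable, and `φ'` never vanishes because `φ` has a differentiable left
inverse, so the chain rule turns the critical point `0` of `f₀` into the critical point `Φ⁻¹ 0`
of `f₁`. But the partial derivatives `2xz + (y² - 1)`, `-2(1 - x)y`, `x²` of `f₁` have no common
zero: the last forces `x = 0`, then the second `y = 0`, and then the first equals `-1`.
-/

open MvPolynomial

/-- A self-map of `ℂ³` is a polynomial map if each coordinate is given by a polynomial. -/
def IsPolyMap3 (Φ : (Fin 3 → ℂ) → (Fin 3 → ℂ)) : Prop :=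
  ∃ F : Fin 3 → MvPolynomial (Fin 3) ℂ, ∀ p i, Φ p i = eval p (F i)

/-- A self-map of `ℂ` is a polynomial map if it is given by a polynomial. -/
def IsPolyMap1 (φ : ℂ → ℂ) : Prop :=
  ∃ F : Polynomial ℂ, ∀ x, φ x = F.eval x

open Function

theorem IsPolyMap1.differentiable {φ : ℂ → ℂ} (hφ : IsPolyMap1 φ) : Differentiable ℂ φ := by
  obtain ⟨P, hP⟩ := hφ
  rw [funext hP]
  exact P.differentiable

theorem IsPolyMap3.differentiable {Φ : (Fin 3 → ℂ) → (Fin 3 → ℂ)} (hΦ : IsPolyMap3 Φ) :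
    Differentiable ℂ Φ := by
  obtain ⟨F, hF⟩ := hΦ
  refine fun p => differentiableAt_pi.2 fun i => ?_
  simp only [hF]
  exact (AnalyticOnNhd.eval_mvPolynomial (F i) p trivial).differentiableAt

section

variable {𝕜 : Type*} [NontriviallyNormedField 𝕜]

theorem HasDerivAt.ne_zero_of_leftInverse {φ ψ : 𝕜 → 𝕜} {φ' x : 𝕜} (h : LeftInverse ψ φ)
    (hψ : DifferentiableAt 𝕜 ψ (φ x)) (hφ : HasDerivAt φ φ' x) : φ' ≠ 0 := by
  have hid := hψ.hasDerivAt.comp x hφ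
  rw [h.comp_eq_id] at hid
  exact right_ne_zero_of_mul_eq_one (hid.unique (hasDerivAt_id x))

variable {E F : Type*} [NormedAddCommGroup E] [NormedSpace 𝕜 E]
  [NormedAddCommGroup F] [NormedSpace 𝕜 F]

theorem hasFDerivAt_zero_of_comp_eq {g : F → 𝕜} {Φ : E → F} {φ : 𝕜 → 𝕜} {f : E → 𝕜}
    {φ' : 𝕜} {p : E} (hcomp : ∀ q, g (Φ q) = φ (f q)) (hg : HasFDerivAt g (0 : F →L[𝕜] 𝕜) (Φ p))
    (hΦ : DifferentiableAt 𝕜 Φ p) (hφ : HasDerivAt φ φ' (f p)) (hφ' : φ' ≠ 0)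
    (hf : DifferentiableAt 𝕜 f p) : HasFDerivAt f (0 : E →L[𝕜] 𝕜) p := by
  have hgΦ : HasFDerivAt (g ∘ Φ) (0 : E →L[𝕜] 𝕜) p := by
    simpa using hg.comp p hΦ.hasFDerivAt
  rw [show g ∘ Φ = φ ∘ f from funext hcomp] at hgΦ
  have hφf := (hφ.comp_hasFDerivAt p hf.hasFDerivAt).unique hgΦ
  have hf' : fderiv 𝕜 f p = 0 := by
    ext v
    simpa [hφ'] using DFunLike.congr_fun hφf v
  exact hf' ▸ hf.hasFDerivAt

theorem HasFDerivAt.hasDerivAt_update {ι : Type*} [Fintype ι] [DecidableEq ι] {f : (ι → 𝕜) → F}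
    {f' : (ι → 𝕜) →L[𝕜] F} {p : ι → 𝕜} (hf : HasFDerivAt f f' p) (i : ι) :
    HasDerivAt (fun s => f (update p i s)) (f' (Pi.single i 1)) (p i) := by
  have hf' : HasFDerivAt f f' (update p i (p i)) := by rwa [update_eq_self]
  exact hf'.comp_hasDerivAt (p i) (_root_.hasDerivAt_update p i (p i))

end

def f₀ (p : Fin 3 → ℂ) : ℂ := p 0 ^ 2 * p 2 - (p 1 ^ 2 - 1)
def f₁ (p : Fin 3 → ℂ) : ℂ := p 0 ^ 2 * p 2 - (1 - p 0) * (p 1 ^ 2 - 1)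

theorem hasFDerivAt_f₀_zero : HasFDerivAt f₀ (0 : (Fin 3 → ℂ) →L[ℂ] ℂ) 0 := by
  have hx (i : Fin 3) : HasFDerivAt (fun p : Fin 3 → ℂ => p i) (ContinuousLinearMap.proj i) 0 :=
    hasFDerivAt_apply (𝕜 := ℂ) i (0 : Fin 3 → ℂ)
  have h := (((hx 0).pow 2).mul (hx 2)).sub (((hx 1).pow 2).sub_const 1)
  exact h.congr_fderiv (by ext; simp)

theorem f₁_partials_eq_zero {p : Fin 3 → ℂ} (h : HasFDerivAt f₁ (0 : (Fin 3 → ℂ) →L[ℂ] ℂ) p) :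
    2 * p 0 * p 2 + (p 1 ^ 2 - 1) = 0 ∧ -(1 - p 0) * (2 * p 1) = 0 ∧ p 0 ^ 2 = 0 := by
  have partial_eq_zero (i : Fin 3) {d : ℂ}
      (hd : HasDerivAt (fun s => f₁ (update p i s)) d (p i)) : d = 0 :=
    ((h.hasDerivAt_update i).unique hd).symm
  refine ⟨partial_eq_zero 0 ?_, partial_eq_zero 1 ?_, partial_eq_zero 2 ?_⟩
  all_goals simp only [f₁, update_self, update_of_ne, ne_eq, Fin.reduceEq, not_false_eq_true,
    zero_ne_one, one_ne_zero]
  · exact (((hasDerivAt_pow 2 _).mul_const _).sub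
      ((hasDerivAt_id _).const_sub 1 |>.mul_const _)).congr_deriv (by simp; ring)
  · exact (((hasDerivAt_pow 2 _).sub_const 1).const_mul _ |>.const_sub _).congr_deriv
      (by simp; ring)
  · exact (((hasDerivAt_id _).const_mul _).sub_const _).congr_deriv (by simp)

theorem not_f₁_partials_eq_zero (p : Fin 3 → ℂ) :
    ¬(2 * p 0 * p 2 + (p 1 ^ 2 - 1) = 0 ∧ -(1 - p 0) * (2 * p 1) = 0 ∧ p 0 ^ 2 = 0) := by
  rintro ⟨h₀, h₁, h₂⟩
  have hx : p 0 = 0 := pow_eq_zero_iff two_ne_zero |>.1 h₂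
  have hy : p 1 = 0 := by simpa [hx] using h₁
  simp [hx, hy] at h₀

theorem differentiable_f₁ : Differentiable ℂ f₁ := by
  unfold f₁
  fun_prop

/-- The surfaces `{x²z - (y²-1) = 0}` and `{x²z - (1-x)(y²-1) = 0}` in `ℂ³` are algebraically
inequivalent embeddings: the level surface `f₀⁻¹(1)` is singular at the origin, every level
surface of `f₁` is nonsingular, and there is no algebraic automorphism `Φ` of `ℂ³` and
automorphism `φ` of `ℂ` with `f₀ ∘ Φ = φ ∘ f₁`. -/
theorem stmt12 :
    let f₀ : (Fin 3 → ℂ) → ℂ := fun p => p 0 ^ 2 * p 2 - (p 1 ^ 2 - 1)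
    let f₁ : (Fin 3 → ℂ) → ℂ := fun p => p 0 ^ 2 * p 2 - (1 - p 0) * (p 1 ^ 2 - 1)
    (f₀ (fun _ => 0) = 1 ∧
      (2 * (0 : ℂ) * 0 = 0 ∧ -(2 * (0 : ℂ)) = 0 ∧ ((0 : ℂ)) ^ 2 = 0)) ∧
    (∀ (t : ℂ) (p : Fin 3 → ℂ), f₁ p = t →
      ¬(2 * p 0 * p 2 + (p 1 ^ 2 - 1) = 0 ∧ -(1 - p 0) * (2 * p 1) = 0 ∧ p 0 ^ 2 = 0)) ∧
    ¬ ∃ (Φ : (Fin 3 → ℂ) ≃ (Fin 3 → ℂ)) (φ : ℂ ≃ ℂ),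
      IsPolyMap3 Φ ∧ IsPolyMap3 Φ.symm ∧ IsPolyMap1 φ ∧ IsPolyMap1 φ.symm ∧
      ∀ p, f₀ (Φ p) = φ (f₁ p) := by
  intro _ _
  refine ⟨by norm_num, fun _ p _ => not_f₁_partials_eq_zero p, ?_⟩
  rintro ⟨Φ, φ, hΦ, -, hφ, hφ_symm, hcomp⟩
  set p := Φ.symm 0
  have hφ' := (hφ.differentiable (f₁ p)).hasDerivAt
  have hp : HasFDerivAt f₁ (0 : (Fin 3 → ℂ) →L[ℂ] ℂ) p :=
    hasFDerivAt_zero_of_comp_eq hcomp (by rw [Φ.apply_symm_apply]; exact hasFDerivAt_f₀_zero)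
      (hΦ.differentiable p) hφ' (hφ'.ne_zero_of_leftInverse φ.left_inv (hφ_symm.differentiable _))
      (differentiable_f₁ p)
  exact not_f₁_partials_eq_zero p (f₁_partials_eq_zero hp)
end

section
/- Let k be a field of characteristic zero, P ∈ k[y] with r ≥ 2 simple roots, h ≥ 2, and let S = {x^h z − (1−x)P(y) = 0} ⊂ A³_k. For a ∈ k*, define θ̃_a : S → S by θ̃_a(x,y,z) = the composite φ^s ∘ H_a ∘ φ_s, where H_a(x,y,z) = (ax, y, a^{−h}z), φ^s is induced by (x,y,z) ↦ (x,y,(1−x)z) and φ_s by (x,y,z) ↦ (x, y, (∑_{i=0}^{h−1} x^i)z + P(y)). Then a ↦ θ̃_a defines an action of G_m = k* on S by automorphisms, with θ̃_a*(x) = a·x. -/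
open Polynomial

/-- The conjugated maps `θ̃_a = φ^s ∘ H_a ∘ φ_s` define an action of `k*` on the surface
`S = {x^h z - (1-x)P(y) = 0}` by automorphisms, with `θ̃_a^*(x) = a x`. -/
theorem stmt13 (k : Type*) [Field k] [CharZero k] (P : Polynomial k) (r : ℕ) (hr : 2 ≤ r)
    (hsp : (P.map (RingHom.id k)).Splits) (hsq : Squarefree P) (hd : P.natDegree = r)
    (h : ℕ) (hh : 2 ≤ h) :
    let φs : k × k × k → k × k × k := fun p => (p.1, p.2.1, (1 - p.1) * p.2.2)
    let φi : k × k × k → k × k × k := fun p =>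
      (p.1, p.2.1, (∑ i ∈ Finset.range h, p.1 ^ i) * p.2.2 + P.eval p.2.1)
    let H : k → k × k × k → k × k × k := fun a p => (a * p.1, p.2.1, a⁻¹ ^ h * p.2.2)
    let θ : k → k × k × k → k × k × k := fun a => φs ∘ H a ∘ φi
    let S : Set (k × k × k) := {p | p.1 ^ h * p.2.2 = (1 - p.1) * P.eval p.2.1}
    ∀ a : k, a ≠ 0 →
      Set.MapsTo (θ a) S S ∧
      (∀ p ∈ S, θ 1 p = p) ∧
      (∀ b : k, b ≠ 0 → ∀ p ∈ S, θ a (θ b p) = θ (a * b) p) ∧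
      (∀ p, (θ a p).1 = a * p.1) := by
  intro φs φi H θ S a ha
  have key : ∀ x : k, (1 - x) * ∑ i ∈ Finset.range h, x ^ i = 1 - x ^ h := by
    intro x
    have := geom_sum_mul x h
    linear_combination -this
  have hc : a ^ h * a⁻¹ ^ h = 1 := by
    rw [← mul_pow, mul_inv_cancel₀ ha, one_pow]
  refine ⟨?_, ?_, ?_, fun p => rfl⟩
  · rintro ⟨x, y, z⟩ hp
    simp only [S, Set.mem_setOf_eq] at hp ⊢
    simp only [θ, φs, φi, H, Function.comp_apply]
    linear_combination (x ^ h * (1 - a * x) * ((∑ i ∈ Finset.range h, x ^ i) * z + P.eval y)) * hc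
      + ((∑ i ∈ Finset.range h, x ^ i) * (1 - a * x)) * hp
      + ((1 - a * x) * P.eval y) * key x
  · rintro ⟨x, y, z⟩ hp
    simp only [S, Set.mem_setOf_eq] at hp
    simp only [θ, φs, φi, H, Function.comp_apply, one_mul, inv_one, one_pow, Prod.mk.injEq]
    refine ⟨trivial, trivial, ?_⟩
    linear_combination z * key x - hp
  · rintro b hb ⟨x, y, z⟩ hp
    simp only [S, Set.mem_setOf_eq] at hp
    have hcb : b ^ h * b⁻¹ ^ h = 1 := by
      rw [← mul_pow, mul_inv_cancel₀ hb, one_pow]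
    simp only [θ, φs, φi, H, Function.comp_apply, Prod.mk.injEq]
    refine ⟨by ring, trivial, ?_⟩
    rw [mul_inv, mul_pow]
    set T := (∑ i ∈ Finset.range h, x ^ i) * z + P.eval y with hT
    set C := (1 - a * (b * x)) * a⁻¹ ^ h with hC
    have hbx := key (b * x)
    rw [mul_pow] at hbx
    linear_combination (C * b⁻¹ ^ h * T) * hbx
      - (C * x ^ h * T) * hcb
      - (C * (∑ i ∈ Finset.range h, x ^ i)) * hp
      - (C * P.eval y) * key x
end

section
/- Let k be a field and h ≥ 2. For h = 2 and a = −1 the conjugated action of the previous construction is induced by the endomorphism J(x,y,z) = (−x, y, (1+x)((1+x)z + P(y))) of A³_k, which satisfies J*(x²z − (1−x)P(y)) = (1+x)²·(x²z − (1−x)P(y)); hence J maps the surface S = {x²z − (1−x)P(y) = 0} into S, and J ∘ J restricts to the identity on S. -/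
open Polynomial

/-- The endomorphism `J(x,y,z) = (-x, y, (1+x)((1+x)z + P(y)))` of A³ satisfies
`J^*(x²z - (1-x)P(y)) = (1+x)²(x²z - (1-x)P(y))`, hence preserves the surface
`S = {x²z - (1-x)P(y) = 0}`, and `J ∘ J` restricts to the identity on `S`. -/
theorem stmt14 (k : Type*) [Field k] (P : Polynomial k) :
    let J : k × k × k → k × k × k := fun p =>
      (-p.1, p.2.1, (1 + p.1) * ((1 + p.1) * p.2.2 + P.eval p.2.1))
    (∀ p : k × k × k,
      (J p).1 ^ 2 * (J p).2.2 - (1 - (J p).1) * P.eval (J p).2.1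
        = (1 + p.1) ^ 2 * (p.1 ^ 2 * p.2.2 - (1 - p.1) * P.eval p.2.1)) ∧
    (∀ p : k × k × k, p.1 ^ 2 * p.2.2 = (1 - p.1) * P.eval p.2.1 → J (J p) = p) := by
  intro J
  constructor
  · intro p; simp only [J]; ring
  · intro p h
    simp only [J]
    refine Prod.ext (by simp) (Prod.ext rfl ?_)
    simp only
    linear_combination (p.1 ^ 2 - 2) * h
end
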